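/- arXiv:2408.03792 — 2 statements merged into one kernel-verified Lean document; each statement's English description precedes it below -/
import Mathlib

section
/- For natural numbers m1, m2, let a_{k,l} = C(m2,k)·C(m1+m2-k,l) for 0 ≤ k ≤ m2 and 0 ≤ l ≤ m1+m2-k (and a_{k,l} = 0 otherwise). Then for all integers k, l we have a_{k,l}^2 ≥ a_{k-1,l} · a_{k+1,l}. -/
/-!
In `k`, `a_{k,l} = C(m2,k) · C(m1+m2-k,l)` is the product of two log-concave sequences:
`C(m2,k)` in its lower index and `C(n,l)` in its upper index `n = m1+m2-k`. Both are
log-concave because the ratios of consecutive terms, `C(m,k+1)/C(m,k) = (m-k)/(k+1)` and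
`C(n+1,l)/C(n,l) = (n+1)/(n+1-l)`, decrease. Outside the support the left-hand side vanishes.
-/

/-- The coefficient `a_{k,l} = C(m2,k) * C(m1+m2-k,l)` of `x1^k x2^l` in
`(x2+1)^{m1} (x1+x2+1)^{m2}`, extended by `0` outside the range
`0 ≤ k ≤ m2`, `0 ≤ l ≤ m1+m2-k`. -/
def clusterCoeff (m1 m2 : ℕ) (k l : ℤ) : ℕ :=
  if 0 ≤ k ∧ k ≤ (m2 : ℤ) ∧ 0 ≤ l ∧ l ≤ (m1 : ℤ) + m2 - k then
    m2.choose k.toNat * (m1 + m2 - k.toNat).choose l.toNat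
  else 0

namespace Nat

theorem choose_mul_choose_add_two_le_sq (n k : ℕ) :
    n.choose k * n.choose (k + 2) ≤ n.choose (k + 1) ^ 2 := by
  rcases lt_or_ge n (k + 2) with hn | hn
  · simp [choose_eq_zero_of_lt hn]
  obtain ⟨m, rfl⟩ := exists_add_of_le hn
  have h₁ : (k + 2 + m).choose (k + 1) * (k + 1) = (k + 2 + m).choose k * (m + 2) := by
    rw [choose_succ_right_eq]; congr 1; omega
  have h₂ : (k + 2 + m).choose (k + 2) * (k + 2) = (k + 2 + m).choose (k + 1) * (m + 1) := by
    rw [choose_succ_right_eq]; congr 1; omega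
  refine le_of_mul_le_mul_right (a := (k + 2) * (m + 2)) ?_ (by positivity)
  calc (k + 2 + m).choose k * (k + 2 + m).choose (k + 2) * ((k + 2) * (m + 2))
      = ((k + 2 + m).choose k * (m + 2)) * ((k + 2 + m).choose (k + 2) * (k + 2)) := by ring
    _ = (k + 2 + m).choose (k + 1) ^ 2 * ((k + 1) * (m + 1)) := by rw [← h₁, h₂]; ring
    _ ≤ (k + 2 + m).choose (k + 1) ^ 2 * ((k + 2) * (m + 2)) := by gcongr <;> omega

theorem choose_mul_add_two_choose_le_sq (n k : ℕ) :
    n.choose k * (n + 2).choose k ≤ (n + 1).choose k ^ 2 := by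
  rcases lt_or_ge n k with hn | hn
  · simp [choose_eq_zero_of_lt hn]
  obtain ⟨m, rfl⟩ := exists_add_of_le hn
  have h₁ : (k + m).choose k * (k + m + 1) = (k + m + 1).choose k * (m + 1) := by
    rw [choose_mul_succ_eq]; congr 1; omega
  have h₂ : (k + m + 1).choose k * (k + m + 2) = (k + m + 2).choose k * (m + 2) := by
    rw [choose_mul_succ_eq]; congr 1; omega
  refine le_of_mul_le_mul_right (a := (k + m + 1) * (m + 2)) ?_ (by positivity)
  calc (k + m).choose k * (k + m + 2).choose k * ((k + m + 1) * (m + 2))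
      = ((k + m).choose k * (k + m + 1)) * ((k + m + 2).choose k * (m + 2)) := by ring
    _ = (k + m + 1).choose k ^ 2 * ((m + 1) * (k + m + 2)) := by rw [h₁, ← h₂]; ring
    _ ≤ (k + m + 1).choose k ^ 2 * ((k + m + 1) * (m + 2)) := Nat.mul_le_mul_left _ (by nlinarith)

end Nat

section clusterCoeff

variable {m1 m2 : ℕ}

theorem clusterCoeff_of_neg_left {k : ℤ} (hk : k < 0) (l : ℤ) : clusterCoeff m1 m2 k l = 0 :=
  if_neg (by omega)

theorem clusterCoeff_of_lt_left {k : ℤ} (hk : (m2 : ℤ) < k) (l : ℤ) :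
    clusterCoeff m1 m2 k l = 0 :=
  if_neg (by omega)

theorem clusterCoeff_of_neg_right (k : ℤ) {l : ℤ} (hl : l < 0) : clusterCoeff m1 m2 k l = 0 :=
  if_neg (by omega)

theorem clusterCoeff_natCast_of_add_eq {n k : ℕ} (h : m1 + m2 = n + k) (l : ℕ) :
    clusterCoeff m1 m2 k l = m2.choose k * n.choose l := by
  have hn : m1 + m2 - k = n := by omega
  unfold clusterCoeff
  split_ifs with hs
  · simp [hn]
  · rcases lt_or_ge m2 k with hk | hk
    · simp [Nat.choose_eq_zero_of_lt hk]
    · simp [Nat.choose_eq_zero_of_lt (show n < l by omega)]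

end clusterCoeff

/-- `a_{k,l}^2 ≥ a_{k-1,l} * a_{k+1,l}` for all integers `k, l`. -/
theorem clusterCoeff_logConcave_fst (m1 m2 : ℕ) (k l : ℤ) :
    clusterCoeff m1 m2 (k - 1) l * clusterCoeff m1 m2 (k + 1) l ≤
      (clusterCoeff m1 m2 k l) ^ 2 := by
  rcases lt_or_ge (k - 1) 0 with hk | hk
  · simp [clusterCoeff_of_neg_left hk]
  rcases lt_or_ge (m2 : ℤ) (k + 1) with hk' | hk'
  · simp [clusterCoeff_of_lt_left hk']
  rcases lt_or_ge l 0 with hl | hl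
  · simp [clusterCoeff_of_neg_right _ hl]
  obtain ⟨j, rfl⟩ : ∃ j : ℕ, k = j + 1 := ⟨(k - 1).toNat, by omega⟩
  lift l to ℕ using hl
  obtain ⟨n, hn⟩ : ∃ n, m1 + m2 = n + (j + 2) := ⟨m1 + m2 - (j + 2), by omega⟩
  have hprev : clusterCoeff m1 m2 (j + 1 - 1) l = m2.choose j * (n + 2).choose l := by
    rw [add_sub_cancel_right]; exact clusterCoeff_natCast_of_add_eq (by omega) l
  have hmid : clusterCoeff m1 m2 (j + 1) l = m2.choose (j + 1) * (n + 1).choose l := by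
    exact_mod_cast clusterCoeff_natCast_of_add_eq (k := j + 1) (by omega) l
  have hnext : clusterCoeff m1 m2 (j + 1 + 1) l = m2.choose (j + 2) * n.choose l := by
    exact_mod_cast clusterCoeff_natCast_of_add_eq (k := j + 2) (by omega) l
  rw [hprev, hmid, hnext]
  calc m2.choose j * (n + 2).choose l * (m2.choose (j + 2) * n.choose l)
      = m2.choose j * m2.choose (j + 2) * (n.choose l * (n + 2).choose l) := by ring
    _ ≤ m2.choose (j + 1) ^ 2 * (n + 1).choose l ^ 2 :=
      Nat.mul_le_mul (Nat.choose_mul_choose_add_two_le_sq m2 j)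
        (Nat.choose_mul_add_two_choose_le_sq n l)
    _ = (m2.choose (j + 1) * (n + 1).choose l) ^ 2 := by ring
end

section
/- For all natural numbers m1, m2, the Laurent polynomial ((x2+1)/x1)^{m1} · x2^{m2} is log-concave. -/
/-! Up to the Laurent monomial `x1^(-m1) * x2^m2`, the cluster monomial is `(1 + x2)^m1`.
Multiplying by a monomial only translates the exponent lattice, so log-concavity reduces to that of
`(1 + x_i)^n`, whose coefficients are the binomial coefficients `C(n, k)` on the ray `k • e_i`:
along that ray this is `C(n, k)^2 ≥ C(n, k-1) * C(n, k+1)`, and in any other direction at most one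
of the two neighbours of a lattice point lies on the ray. -/

/-- The Laurent monomial with exponent vector `d` and coefficient `1`,
as an element of the ring of multivariate Laurent polynomials
(the add-monoid algebra of `ℤ` over the group of exponent vectors). -/
noncomputable def Lmon (m : ℕ) (d : Fin m →₀ ℤ) : AddMonoidAlgebra ℤ (Fin m →₀ ℤ) :=
  AddMonoidAlgebra.single d 1

/-- The Laurent monomial `xᵢ^e`. -/
noncomputable def LX (m : ℕ) (i : Fin m) (e : ℤ) : AddMonoidAlgebra ℤ (Fin m →₀ ℤ) :=
  Lmon m (Finsupp.single i e)

/-- A multivariate Laurent polynomial is log-concave if its coefficients are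
nonnegative and, in each variable separately, the square of every coefficient is
at least the product of its two neighboring coefficients. -/
def IsLogConcave {m : ℕ} (f : AddMonoidAlgebra ℤ (Fin m →₀ ℤ)) : Prop :=
  (∀ d, 0 ≤ f.coeff d) ∧
  ∀ (j : Fin m) (d : Fin m →₀ ℤ),
    f.coeff (d - Finsupp.single j 1) * f.coeff (d + Finsupp.single j 1) ≤ (f.coeff d) ^ 2

theorem Nat.choose_mul_choose_add_two_le_sq_s11 (n j : ℕ) :
    n.choose j * n.choose (j + 2) ≤ n.choose (j + 1) ^ 2 := by
  have h1 := Nat.choose_succ_right_eq n j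
  have h2 := Nat.choose_succ_right_eq n (j + 1)
  refine Nat.le_of_mul_le_mul_right ?_ (show 0 < (j + 1) * (j + 2) by positivity)
  calc n.choose j * n.choose (j + 2) * ((j + 1) * (j + 2))
      = n.choose j * n.choose (j + 1) * ((n - (j + 1)) * (j + 1)) := by
        linear_combination (n.choose j * (j + 1)) * h2
    _ ≤ n.choose j * n.choose (j + 1) * ((n - j) * (j + 2)) := by gcongr <;> omega
    _ = n.choose (j + 1) ^ 2 * ((j + 1) * (j + 2)) := by
        linear_combination (n.choose (j + 1) * (j + 2)) * h1.symm

theorem IsLogConcave.mul_Lmon {m : ℕ} {f : AddMonoidAlgebra ℤ (Fin m →₀ ℤ)}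
    (hf : IsLogConcave f) (e : Fin m →₀ ℤ) : IsLogConcave (f * Lmon m e) := by
  simp only [IsLogConcave, Lmon, AddMonoidAlgebra.coeff_mul_single_apply, mul_one,
    ← sub_eq_add_neg]
  refine ⟨fun d => hf.1 (d - e), fun j d => ?_⟩
  rw [sub_right_comm, add_sub_right_comm]
  exact hf.2 j (d - e)

section OneAddLXPow

variable {m : ℕ} (i : Fin m) (n : ℕ)

theorem coeff_one_add_LX_pow (d : Fin m →₀ ℤ) :
    ((LX m i 1 + 1) ^ n).coeff d =
      ∑ k ∈ Finset.range (n + 1),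
        if Finsupp.single i (k : ℤ) = d then (n.choose k : ℤ) else 0 := by
  rw [add_pow, AddMonoidAlgebra.coeff_sum, Finset.sum_apply']
  refine Finset.sum_congr rfl fun k _ => ?_
  simp only [LX, Lmon, AddMonoidAlgebra.single_pow, one_pow, mul_one,
    AddMonoidAlgebra.natCast_def, AddMonoidAlgebra.single_mul_single, one_mul,
    AddMonoidAlgebra.coeff_single, Finsupp.single_apply, Finsupp.smul_single, nsmul_one,
    add_zero]

theorem coeff_one_add_LX_pow_single (k : ℕ) :
    ((LX m i 1 + 1) ^ n).coeff (Finsupp.single i (k : ℤ)) = n.choose k := by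
  rw [coeff_one_add_LX_pow]
  simp only [(Finsupp.single_injective i).eq_iff, Nat.cast_inj, Finset.sum_ite_eq',
    Finset.mem_range]
  split_ifs with hk
  · rfl
  · rw [Nat.choose_eq_zero_of_lt (by omega), Nat.cast_zero]

theorem coeff_one_add_LX_pow_eq_zero {d : Fin m →₀ ℤ}
    (hd : ∀ k : ℕ, Finsupp.single i (k : ℤ) ≠ d) :
    ((LX m i 1 + 1) ^ n).coeff d = 0 := by
  rw [coeff_one_add_LX_pow]
  exact Finset.sum_eq_zero fun k _ => if_neg (hd k)

theorem isLogConcave_one_add_LX_pow : IsLogConcave ((LX m i 1 + 1) ^ n) := by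
  refine ⟨fun d => ?_, fun j d => ?_⟩
  · rw [coeff_one_add_LX_pow]
    exact Finset.sum_nonneg fun k _ => by split_ifs <;> positivity
  by_cases hd : ∃ k : ℕ, Finsupp.single i (k : ℤ) = d - Finsupp.single j 1
  swap
  · push Not at hd
    rw [coeff_one_add_LX_pow_eq_zero i n hd, zero_mul]
    positivity
  obtain ⟨k, hk⟩ := hd
  rw [eq_sub_iff_add_eq] at hk
  by_cases hji : j = i
  · subst hji hk
    have hsucc (l : ℕ) : Finsupp.single j (l : ℤ) + Finsupp.single j 1 =
        Finsupp.single j ((l + 1 : ℕ) : ℤ) := by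
      rw [← Finsupp.single_add, Nat.cast_succ]
    rw [add_sub_cancel_right, hsucc, hsucc]
    simp only [coeff_one_add_LX_pow_single]
    exact_mod_cast Nat.choose_mul_choose_add_two_le_sq_s11 n k
  · have hdj : d j = 1 := by
      rw [← hk, Finsupp.add_apply, Finsupp.single_eq_of_ne hji, Finsupp.single_eq_same, zero_add]
    have hd' (l : ℕ) : Finsupp.single i (l : ℤ) ≠ d + Finsupp.single j 1 := fun hl => by
      have := congrArg (· j) hl
      simp only [Finsupp.add_apply, Finsupp.single_eq_of_ne hji, Finsupp.single_eq_same,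
        hdj] at this
      omega
    rw [coeff_one_add_LX_pow_eq_zero i n hd', mul_zero]
    positivity

end OneAddLXPow

theorem A2_cluster_monomial_eq_mul_Lmon (m1 m2 : ℕ) :
    ((LX 2 1 1 + 1) * LX 2 0 (-1)) ^ m1 * (LX 2 1 1) ^ m2 =
      (LX 2 1 1 + 1) ^ m1 *
        Lmon 2 (Finsupp.single 0 (-(m1 : ℤ)) + Finsupp.single 1 (m2 : ℤ)) := by
  simp [mul_pow, mul_assoc, LX, Lmon, AddMonoidAlgebra.single_pow, Finsupp.smul_single]

/-- The cluster monomial `((x2+1)/x1)^{m1} * x2^{m2}` of type `A₂` is a log-concave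
Laurent polynomial. -/
theorem logConcave_A2_cluster_monomial_second (m1 m2 : ℕ) :
    IsLogConcave (((LX 2 1 1 + 1) * LX 2 0 (-1)) ^ m1 * (LX 2 1 1) ^ m2) := by
  rw [A2_cluster_monomial_eq_mul_Lmon]
  exact (isLogConcave_one_add_LX_pow 1 m1).mul_Lmon _
end
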